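/- arXiv:1403.6024 — 4 statements merged into one kernel-verified Lean document; each statement's English description precedes it below -/
import Mathlib

section
/- For all w, z ∈ (−1,1): if w + z > 0 then K₀(w,z) = (6/π²)·(1/(w−z))·log((1+w)/(1+z)), K₁(w,z) = (3/π²)·1/((1+w)(1+z)), and K₂(w,z) = (1/π²)·(2+w+z)/((1+w)²(1+z)²); and if w + z < 0 then K₀(w,z) = (6/π²)·(1/(z−w))·log((1−w)/(1−z)), K₁(w,z) = (3/π²)·1/((1−w)(1−z)), and K₂(w,z) = (1/π²)·(2−w−z)/((1−w)²(1−z)²). (For w = z the quotient (1/(w−z))·log((1+w)/(1+z)) is interpreted as its limit 1/(1+w) in the first case and 1/(1−w) in the second.) -/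
open MeasureTheory Real Filter Set

noncomputable section

/-- The transition kernel `Ψ₀(w,x,z)` of the Boltzmann–Grad limit of the two-dimensional
periodic Lorentz gas. -/
def psi0 (w x z : ℝ) : ℝ :=
  (6 / π ^ 2) *
  (if 0 < w ∧ -w < z ∧ z < w then
     (if 0 ≤ x ∧ x < 1 / (1 + w) then 1 else 0) +
     (if 1 / (1 + w) ≤ x ∧ x < 1 / (1 + z) then (x⁻¹ - 1 - z) / (w - z) else 0)
   else if 0 < z ∧ -z < w ∧ w < z then
     (if 0 ≤ x ∧ x < 1 / (1 + z) then 1 else 0) +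
     (if 1 / (1 + z) ≤ x ∧ x < 1 / (1 + w) then (x⁻¹ - 1 - w) / (z - w) else 0)
   else if w < 0 ∧ w < z ∧ z < -w then
     (if 0 ≤ x ∧ x < 1 / (1 - w) then 1 else 0) +
     (if 1 / (1 - w) ≤ x ∧ x < 1 / (1 - z) then (x⁻¹ - 1 + z) / (z - w) else 0)
   else if z < 0 ∧ z < w ∧ w < -z then
     (if 0 ≤ x ∧ x < 1 / (1 - z) then 1 else 0) +
     (if 1 / (1 - z) ≤ x ∧ x < 1 / (1 - w) then (x⁻¹ - 1 + w) / (w - z) else 0)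
   else
     (if 0 ≤ x ∧ x < 1 / (1 + |w|) then 1 else 0))

/-- The moments `K_p(w,z) = ∫₀^∞ x^p Ψ₀(w,x,z) dx`. -/
def K (p : ℕ) (w z : ℝ) : ℝ := ∫ x in Set.Ioi (0 : ℝ), x ^ p * psi0 w x z

/-!
On the half-plane `w + z > 0` the kernel `psi0 w · z` is `6 / π ^ 2` times the two-piece profile
`psiProfile s t` with `s = max w z`, `t = min w z`: the constant `1` on `[0, 1/(1+s))`, then
`(x⁻¹ - 1 - t) / (s - t)` on `[1/(1+s), 1/(1+t))`. On `w + z < 0` it is the same profile for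
`(-w, -z)`, so `K p w z = K p (-w) (-z)` there. The moments of the profile are elementary
integrals of powers of `x`, with a logarithm only for `p = 0`; on the diagonal `s = t` the second
piece is empty.
-/

lemma fun_ite_mem_Ico_eq_indicator {α M : Type*} [LinearOrder α] [Zero M] (a b : α) (f : α → M) :
    (fun x ↦ if a ≤ x ∧ x < b then f x else 0) = (Ico a b).indicator f := by
  ext x
  simp only [indicator_apply, mem_Ico]

section IntervalPieces

variable {E : Type*} [NormedAddCommGroup E] {a b : ℝ}

lemma integrable_ite_mem_Ico {f : ℝ → E} (hf : ContinuousOn f (Icc a b)) :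
    Integrable (fun x ↦ if a ≤ x ∧ x < b then f x else 0) := by
  rw [fun_ite_mem_Ico_eq_indicator]
  exact (hf.integrableOn_Icc.mono_set Ico_subset_Icc_self).integrable_indicator measurableSet_Ico

lemma setIntegral_Ici_ite_mem_Ico [NormedSpace ℝ E] (ha : 0 ≤ a) (hab : a ≤ b) (f : ℝ → E) :
    ∫ x in Ici 0, (if a ≤ x ∧ x < b then f x else 0) = ∫ x in a..b, f x := by
  rw [fun_ite_mem_Ico_eq_indicator, setIntegral_indicator measurableSet_Ico,
    inter_eq_self_of_subset_right (Ico_subset_Ici_self.trans (Ici_subset_Ici.2 ha)),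
    intervalIntegral.integral_of_le hab, integral_Ico_eq_integral_Ioo,
    integral_Ioc_eq_integral_Ioo]

end IntervalPieces

lemma integral_inv_sub {a b : ℝ} (ha : 0 < a) (hb : 0 < b) (c : ℝ) :
    ∫ x in a..b, (x⁻¹ - c) = Real.log (b / a) - c * (b - a) := by
  have hinv : IntervalIntegrable (fun x : ℝ ↦ x⁻¹) volume a b :=
    (continuousOn_inv₀.mono fun x hx ↦ ((lt_min ha hb).trans_le hx.1).ne').intervalIntegrable
  rw [intervalIntegral.integral_sub hinv intervalIntegrable_const, integral_inv_of_pos ha hb,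
    intervalIntegral.integral_const, smul_eq_mul, mul_comm]

lemma integral_pow_succ_mul_inv_sub (p : ℕ) {a b : ℝ} (ha : 0 < a) (hb : 0 < b) (c : ℝ) :
    ∫ x in a..b, x ^ (p + 1) * (x⁻¹ - c) =
      (b ^ (p + 1) - a ^ (p + 1)) / (p + 1) - c * ((b ^ (p + 2) - a ^ (p + 2)) / (p + 2)) := by
  have hpos : ∀ x ∈ uIcc a b, 0 < x := fun x hx ↦ (lt_min ha hb).trans_le hx.1
  rw [intervalIntegral.integral_congr (g := fun x ↦ x ^ p - c * x ^ (p + 1)),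
    intervalIntegral.integral_sub (intervalIntegral.intervalIntegrable_pow p)
      ((intervalIntegral.intervalIntegrable_pow (p + 1)).const_mul c),
    intervalIntegral.integral_const_mul, integral_pow, integral_pow]
  · push_cast; ring
  · intro x hx
    have := (hpos x hx).ne'
    dsimp only
    field_simp
    ring

def psiProfile (s t x : ℝ) : ℝ :=
  (if 0 ≤ x ∧ x < 1 / (1 + s) then 1 else 0) +
  (if 1 / (1 + s) ≤ x ∧ x < 1 / (1 + t) then (x⁻¹ - 1 - t) / (s - t) else 0)

lemma psiProfile_self (s x : ℝ) :
    psiProfile s s x = if 0 ≤ x ∧ x < 1 / (1 + s) then 1 else 0 := by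
  simp only [psiProfile, and_not_self_iff, lt_iff_not_ge, if_false, add_zero]

lemma psi0_eq_psiProfile_of_add_pos {w z : ℝ} (h : 0 < w + z) (x : ℝ) :
    psi0 w x z = 6 / π ^ 2 * psiProfile (max w z) (min w z) x := by
  unfold psi0
  rcases lt_trichotomy z w with hzw | rfl | hwz
  · rw [if_pos ⟨by linarith, by linarith, hzw⟩, max_eq_left hzw.le, min_eq_right hzw.le]
    rfl
  · rw [if_neg (fun h ↦ h.2.2.false), if_neg (fun h ↦ h.2.2.false),
      if_neg (fun h ↦ h.2.1.false), if_neg (fun h ↦ h.2.1.false), max_self, min_self,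
      psiProfile_self, abs_of_pos (by linarith)]
  · rw [if_neg (fun h ↦ hwz.not_gt h.2.2), if_pos ⟨by linarith, by linarith, hwz⟩,
      max_eq_right hwz.le, min_eq_left hwz.le]
    rfl

lemma psi0_eq_psiProfile_of_add_neg {w z : ℝ} (h : w + z < 0) (x : ℝ) :
    psi0 w x z = 6 / π ^ 2 * psiProfile (max (-w) (-z)) (min (-w) (-z)) x := by
  unfold psi0
  rcases lt_trichotomy z w with hzw | rfl | hwz
  · rw [if_neg (fun h ↦ by linarith [h.1]), if_neg (fun h ↦ hzw.not_gt h.2.2),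
      if_neg (fun h ↦ hzw.not_gt h.2.1), if_pos ⟨by linarith, hzw, by linarith⟩,
      max_eq_right (neg_le_neg hzw.le), min_eq_left (neg_le_neg hzw.le)]
    simp only [psiProfile, ← sub_eq_add_neg, sub_neg_eq_add, neg_add_eq_sub]
  · rw [if_neg (fun h ↦ h.2.2.false), if_neg (fun h ↦ h.2.2.false),
      if_neg (fun h ↦ h.2.1.false), if_neg (fun h ↦ h.2.1.false), max_self, min_self,
      psiProfile_self, abs_of_neg (by linarith), ← sub_eq_add_neg]
  · rw [if_neg (fun h ↦ hwz.not_gt h.2.2), if_neg (fun h ↦ by linarith [h.1]),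
      if_pos ⟨by linarith, hwz, by linarith⟩,
      max_eq_left (neg_le_neg hwz.le), min_eq_right (neg_le_neg hwz.le)]
    simp only [psiProfile, ← sub_eq_add_neg, sub_neg_eq_add, neg_add_eq_sub]

lemma integral_pow_mul_psiProfile (p : ℕ) {s t : ℝ} (ht : -1 < t) (hts : t ≤ s) :
    ∫ x in Ici 0, x ^ p * psiProfile s t x =
      (∫ x in 0..1 / (1 + s), x ^ p) +
        (∫ x in 1 / (1 + s)..1 / (1 + t), x ^ p * (x⁻¹ - (1 + t))) / (s - t) := by
  have ha : 0 < 1 / (1 + s) := by apply one_div_pos.2; linarith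
  have hab : 1 / (1 + s) ≤ 1 / (1 + t) := one_div_le_one_div_of_le (by linarith) (by linarith)
  have hsplit : ∀ x, x ^ p * psiProfile s t x =
      (if 0 ≤ x ∧ x < 1 / (1 + s) then x ^ p else 0) +
      (if 1 / (1 + s) ≤ x ∧ x < 1 / (1 + t) then x ^ p * (x⁻¹ - (1 + t)) / (s - t)
        else 0) := by
    intro x
    simp only [psiProfile, mul_add, mul_ite, mul_one, mul_zero, mul_div_assoc, sub_sub]
  have hcont : ContinuousOn (fun x ↦ x ^ p * (x⁻¹ - (1 + t)) / (s - t))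
      (Icc (1 / (1 + s)) (1 / (1 + t))) := by
    have : ∀ x ∈ Icc (1 / (1 + s)) (1 / (1 + t)), x ≠ 0 := fun x hx ↦ (ha.trans_le hx.1).ne'
    fun_prop (disch := assumption)
  simp only [hsplit]
  rw [integral_add (integrable_ite_mem_Ico (continuous_pow p).continuousOn).integrableOn
      (integrable_ite_mem_Ico hcont).integrableOn,
    setIntegral_Ici_ite_mem_Ico le_rfl ha.le, setIntegral_Ici_ite_mem_Ico ha.le hab,
    intervalIntegral.integral_div]

lemma integral_psiProfile {s t : ℝ} (ht : -1 < t) (hts : t < s) :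
    ∫ x in Ici 0, x ^ 0 * psiProfile s t x = Real.log ((1 + s) / (1 + t)) / (s - t) := by
  have h1s : 0 < 1 + s := by linarith
  have h1t : 0 < 1 + t := by linarith
  rw [integral_pow_mul_psiProfile 0 ht hts.le]
  simp only [pow_zero, one_mul, intervalIntegral.integral_const, smul_eq_mul]
  rw [integral_inv_sub (by positivity) (by positivity)]
  have : s - t ≠ 0 := by linarith
  field_simp
  ring

lemma integral_psiProfile_self {s : ℝ} (hs : -1 < s) :
    ∫ x in Ici 0, x ^ 0 * psiProfile s s x = 1 / (1 + s) := by
  rw [integral_pow_mul_psiProfile 0 hs le_rfl]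
  simp

lemma integral_mul_psiProfile {s t : ℝ} (ht : -1 < t) (hts : t ≤ s) :
    ∫ x in Ici 0, x ^ 1 * psiProfile s t x = 1 / (2 * (1 + s) * (1 + t)) := by
  have h1s : 0 < 1 + s := by linarith
  have h1t : 0 < 1 + t := by linarith
  have := h1s.ne'
  have := h1t.ne'
  rw [integral_pow_mul_psiProfile 1 ht hts, integral_pow,
    integral_pow_succ_mul_inv_sub 0 (by positivity) (by positivity)]
  push_cast
  rcases hts.lt_or_eq with hlt | rfl
  · have : s - t ≠ 0 := by linarith
    field_simp
    ring
  · simp only [sub_self, zero_div, mul_zero, div_zero, add_zero]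
    field_simp
    ring

lemma integral_sq_mul_psiProfile {s t : ℝ} (ht : -1 < t) (hts : t ≤ s) :
    ∫ x in Ici 0, x ^ 2 * psiProfile s t x = (2 + s + t) / (6 * (1 + s) ^ 2 * (1 + t) ^ 2) := by
  have h1s : 0 < 1 + s := by linarith
  have h1t : 0 < 1 + t := by linarith
  have := h1s.ne'
  have := h1t.ne'
  rw [integral_pow_mul_psiProfile 2 ht hts, integral_pow,
    integral_pow_succ_mul_inv_sub 1 (by positivity) (by positivity)]
  push_cast
  rcases hts.lt_or_eq with hlt | rfl
  · have : s - t ≠ 0 := by linarith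
    field_simp
    ring
  · simp only [sub_self, zero_div, mul_zero, div_zero, add_zero]
    field_simp
    ring

lemma K_eq_of_add_pos (p : ℕ) {w z : ℝ} (h : 0 < w + z) :
    K p w z = 6 / π ^ 2 * ∫ x in Ici 0, x ^ p * psiProfile (max w z) (min w z) x := by
  simp only [K, ← integral_Ici_eq_integral_Ioi, psi0_eq_psiProfile_of_add_pos h,
    mul_left_comm _ (6 / π ^ 2), integral_const_mul]

lemma K_eq_of_add_neg (p : ℕ) {w z : ℝ} (h : w + z < 0) :
    K p w z =
      6 / π ^ 2 * ∫ x in Ici 0, x ^ p * psiProfile (max (-w) (-z)) (min (-w) (-z)) x := by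
  simp only [K, ← integral_Ici_eq_integral_Ioi, psi0_eq_psiProfile_of_add_neg h,
    mul_left_comm _ (6 / π ^ 2), integral_const_mul]

lemma K_comm_of_add_pos (p : ℕ) {w z : ℝ} (h : 0 < w + z) : K p z w = K p w z := by
  rw [K_eq_of_add_pos p h, K_eq_of_add_pos p (by linarith), max_comm, min_comm]

lemma K_neg_neg_of_add_neg (p : ℕ) {w z : ℝ} (h : w + z < 0) : K p (-w) (-z) = K p w z := by
  rw [K_eq_of_add_neg p h, K_eq_of_add_pos p (by linarith)]

lemma K_of_add_pos {w z : ℝ} (hw : w < 1) (hz : z < 1) (h : 0 < w + z) :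
    ((w = z → K 0 w z = 6 / π ^ 2 * (1 / (1 + w))) ∧
       (w ≠ z → K 0 w z = 6 / π ^ 2 * (1 / (w - z)) * Real.log ((1 + w) / (1 + z))) ∧
       K 1 w z = 3 / π ^ 2 * (1 / ((1 + w) * (1 + z))) ∧
       K 2 w z = 1 / π ^ 2 * ((2 + w + z) / ((1 + w) ^ 2 * (1 + z) ^ 2))) := by
  wlog hzw : z ≤ w generalizing w z
  · obtain ⟨h0, h0', h1, h2⟩ := this hz hw (by linarith) (le_of_not_ge hzw)
    simp only [K_comm_of_add_pos _ h] at h0 h0' h1 h2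
    refine ⟨fun he ↦ by rw [h0 he.symm, he], fun hne ↦ ?_, by rw [h1, mul_comm (1 + z)],
      by rw [h2, mul_comm ((1 + z) ^ 2), add_right_comm]⟩
    rw [h0' (Ne.symm hne), ← neg_sub w z, ← inv_div (1 + w), Real.log_inv,
      one_div_neg_eq_neg_one_div]
    ring
  have hz' : -1 < z := by linarith
  simp only [K_eq_of_add_pos _ h, max_eq_left hzw, min_eq_right hzw]
  refine ⟨?_, fun hne ↦ ?_, ?_, ?_⟩
  · rintro rfl
    rw [integral_psiProfile_self hz']
  · rw [integral_psiProfile hz' (hzw.lt_of_ne' hne)]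
    ring
  · rw [integral_mul_psiProfile hz' hzw]
    field_simp
    ring
  · rw [integral_sq_mul_psiProfile hz' hzw]
    field_simp

/-- Explicit formulas for `K₀`, `K₁`, `K₂` in dimension `d = 2`. -/
theorem stmt0 (w z : ℝ) (hw : w ∈ Set.Ioo (-1 : ℝ) 1) (hz : z ∈ Set.Ioo (-1 : ℝ) 1) :
    (0 < w + z →
      ((w = z → K 0 w z = 6 / π ^ 2 * (1 / (1 + w))) ∧
       (w ≠ z → K 0 w z = 6 / π ^ 2 * (1 / (w - z)) * Real.log ((1 + w) / (1 + z))) ∧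
       K 1 w z = 3 / π ^ 2 * (1 / ((1 + w) * (1 + z))) ∧
       K 2 w z = 1 / π ^ 2 * ((2 + w + z) / ((1 + w) ^ 2 * (1 + z) ^ 2)))) ∧
    (w + z < 0 →
      ((w = z → K 0 w z = 6 / π ^ 2 * (1 / (1 - w))) ∧
       (w ≠ z → K 0 w z = 6 / π ^ 2 * (1 / (z - w)) * Real.log ((1 - w) / (1 - z))) ∧
       K 1 w z = 3 / π ^ 2 * (1 / ((1 - w) * (1 - z))) ∧
       K 2 w z = 1 / π ^ 2 * ((2 - w - z) / ((1 - w) ^ 2 * (1 - z) ^ 2)))) := by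
  refine ⟨K_of_add_pos hw.2 hz.2, fun h ↦ ?_⟩
  have hneg := K_of_add_pos (w := -w) (z := -z) (by linarith [hw.1]) (by linarith [hz.1])
    (by linarith)
  simpa only [K_neg_neg_of_add_neg _ h, neg_inj, ne_eq, ← sub_eq_add_neg, neg_sub_neg] using hneg
end
end

section
/- Define Ψ̄₀(x,z) := (1/2)·∫_{−1}^1 Ψ₀(w,x,z) dw, Ψ(x,z) := 2·∫_x^∞ Ψ̄₀(x',z) dx', and Ψ̄(z) := ∫₀^∞ Ψ(x,z) dx. Then there is a constant C such that Ψ̄(z) ≤ C·(1 + log(1/(1−|z|))) for all z ∈ (−1,1); in particular Ψ̄ is integrable on (−1,1), i.e. Ψ̄ ∈ L¹((−1,1), dz). -/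
/-!
In each of its branches the kernel has the form `Ψ₀(w,x,z) = (6/π²)·φ_{p,q}(x)` with
`φ_{p,q}(x) = 1{0 ≤ x < q⁻¹} + 1{q⁻¹ ≤ x < p⁻¹}·(x⁻¹ - p)/(q - p)`, where
`max(1 - |w|, 1 - |z|) ≤ p ≤ q` and `1 ≤ q`. Such a profile takes values in `[0, min(1, x⁻¹)]` and
vanishes once `x⁻¹ ≤ p`. Hence `Ψ₀(·,x,z)` is supported on `|w| > 1 - x⁻¹`, a set of measure at
most `2/x`, so `Ψ̄₀(x,z) ≤ c·min(1, x⁻²) ≤ 4c/(1+x)²` with `c = 6/π²`, and `Ψ̄₀(x,z) = 0` for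
`x ≥ X := 1/(1 - |z|)`. Therefore `Ψ(x,z) ≤ 2∫_x^∞ 4c/(1+t)² dt = 8c/(1+x)`, vanishing beyond
`X`, and `Ψ̄(z) ≤ ∫_0^X 8c/(1+x) dx = 8c·log(1 + X) ≤ 8c·(1 + log X)`. The singularity
`log X = -log(1 - |z|)` is integrable on `(-1,1)`.
-/

open MeasureTheory Real Filter Set

noncomputable section

/-- `Ψ̄₀(x,z) := (1/2)·∫_{−1}^1 Ψ₀(w,x,z) dw`. -/
def psi0bar (x z : ℝ) : ℝ := (1 / 2) * ∫ w in Set.Ioo (-1 : ℝ) 1, psi0 w x z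

/-- `Ψ(x,z) := 2·∫_x^∞ Ψ̄₀(x',z) dx'`. -/
def PsiCT (x z : ℝ) : ℝ := 2 * ∫ x' in Set.Ioi x, psi0bar x' z

/-- `Ψ̄(z) := ∫₀^∞ Ψ(x,z) dx`. -/
def PsiBarMarg (z : ℝ) : ℝ := ∫ x in Set.Ioi (0 : ℝ), PsiCT x z

def kernelProfile (p q x : ℝ) : ℝ :=
  (if 0 ≤ x ∧ x < q⁻¹ then 1 else 0) + (if q⁻¹ ≤ x ∧ x < p⁻¹ then (x⁻¹ - p) / (q - p) else 0)

section kernelProfile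

variable {p q x : ℝ}

lemma kernelProfile_nonneg (hp : 0 < p) (hpq : p ≤ q) : 0 ≤ kernelProfile p q x := by
  unfold kernelProfile
  refine add_nonneg (by split_ifs <;> norm_num) ?_
  split_ifs with h
  · have hx : 0 < x := (inv_pos.2 (hp.trans_le hpq)).trans_le h.1
    have hpx : p < x⁻¹ := (lt_inv_comm₀ hx hp).1 h.2
    exact div_nonneg (by linarith) (by linarith)
  · exact le_rfl

lemma kernelProfile_le_one (hp : 0 < p) (hpq : p ≤ q) : kernelProfile p q x ≤ 1 := by
  have hq : 0 < q := hp.trans_le hpq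
  unfold kernelProfile
  split_ifs with h1 h2 h2
  · linarith [h1.2, h2.1]
  · norm_num
  · have hx : 0 < x := (inv_pos.2 hq).trans_le h2.1
    have hpx : p < x⁻¹ := (lt_inv_comm₀ hx hp).1 h2.2
    have hxq : x⁻¹ ≤ q := (inv_le_comm₀ hq hx).1 h2.1
    rw [zero_add, div_le_one (by linarith)]
    linarith
  · norm_num

lemma kernelProfile_le_inv (hp : 0 < p) (hpq : p ≤ q) (hq : 1 ≤ q) (hx : 0 < x) :
    kernelProfile p q x ≤ x⁻¹ := by
  rcases lt_or_ge x 1 with hx1 | hx1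
  · exact (kernelProfile_le_one hp hpq).trans ((one_le_inv₀ hx).2 hx1.le)
  have hxi : x⁻¹ ≤ 1 := inv_le_one_of_one_le₀ hx1
  unfold kernelProfile
  rw [if_neg fun h => by linarith [(lt_inv_comm₀ hx (by linarith)).1 h.2], zero_add]
  split_ifs with h
  · have hpx : p < x⁻¹ := (lt_inv_comm₀ hx hp).1 h.2
    rw [div_le_iff₀ (by linarith)]
    nlinarith
  · positivity

lemma kernelProfile_eq_zero (hp : 0 < p) (hpq : p ≤ q) (hx : 0 < x) (hxp : x⁻¹ ≤ p) :
    kernelProfile p q x = 0 := by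
  unfold kernelProfile
  rw [if_neg fun h => by linarith [(lt_inv_comm₀ hx (by linarith)).1 h.2],
    if_neg fun h => by linarith [(lt_inv_comm₀ hx hp).1 h.2], add_zero]

end kernelProfile

lemma psi0_eq_kernelProfile (w z : ℝ) :
    ∃ p q, 1 - |w| ≤ p ∧ 1 - |z| ≤ p ∧ p ≤ q ∧ 1 ≤ q ∧
      ∀ x, psi0 w x z = 6 / π ^ 2 * kernelProfile p q x := by
  unfold psi0 kernelProfile
  split_ifs
  · refine ⟨1 + z, 1 + w, ?_, ?_, ?_, ?_, fun x => by ring_nf⟩ <;>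
      grind [abs_of_pos, neg_abs_le]
  · refine ⟨1 + w, 1 + z, ?_, ?_, ?_, ?_, fun x => by ring_nf⟩ <;>
      grind [abs_of_pos, neg_abs_le]
  · refine ⟨1 - z, 1 - w, ?_, ?_, ?_, ?_, fun x => by ring_nf⟩ <;>
      grind [abs_of_neg, le_abs_self]
  · refine ⟨1 - w, 1 - z, ?_, ?_, ?_, ?_, fun x => by ring_nf⟩ <;>
      grind [abs_of_neg, le_abs_self]
  · refine ⟨1 + |w|, 1 + |w|, ?_, ?_, le_rfl, ?_, fun x => ?_⟩ <;>
      grind [abs_nonneg]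

section psi0

variable {w z x : ℝ}

lemma psi0_nonneg (hw : |w| < 1) : 0 ≤ psi0 w x z := by
  obtain ⟨p, q, hpw, -, hpq, -, h⟩ := psi0_eq_kernelProfile w z
  rw [h]
  exact mul_nonneg (by positivity) (kernelProfile_nonneg (by linarith) hpq)

lemma psi0_le (hw : |w| < 1) : psi0 w x z ≤ 6 / π ^ 2 := by
  obtain ⟨p, q, hpw, -, hpq, -, h⟩ := psi0_eq_kernelProfile w z
  rw [h]
  exact mul_le_of_le_one_right (by positivity) (kernelProfile_le_one (by linarith) hpq)

lemma psi0_le_inv (hw : |w| < 1) (hx : 0 < x) : psi0 w x z ≤ 6 / π ^ 2 * x⁻¹ := by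
  obtain ⟨p, q, hpw, -, hpq, hq, h⟩ := psi0_eq_kernelProfile w z
  rw [h]
  gcongr
  exact kernelProfile_le_inv (by linarith) hpq hq hx

lemma psi0_eq_zero (hw : |w| < 1) (hx : 0 < x)
    (hxwz : x⁻¹ ≤ 1 - |w| ∨ x⁻¹ ≤ 1 - |z|) : psi0 w x z = 0 := by
  obtain ⟨p, q, hpw, hpz, hpq, -, h⟩ := psi0_eq_kernelProfile w z
  rw [h, kernelProfile_eq_zero (by linarith) hpq hx (by rcases hxwz with h' | h' <;> linarith),
    mul_zero]

end psi0

lemma measureReal_Ioo_inter_setOf_lt_abs_le {a : ℝ} (ha : 0 ≤ a) :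
    volume.real (Ioo (-1 : ℝ) 1 ∩ {w | 1 - a < |w|}) ≤ 2 * a := by
  have hsub : Ioo (-1 : ℝ) 1 ∩ {w | 1 - a < |w|} ⊆ Ioo (-1) (a - 1) ∪ Ioo (1 - a) 1 := by
    rintro w ⟨⟨hw1, hw2⟩, hw : 1 - a < |w|⟩
    rcases abs_cases w with ⟨h, _⟩ | ⟨h, _⟩
    · exact Or.inr ⟨by linarith, hw2⟩
    · exact Or.inl ⟨hw1, by linarith⟩
  calc volume.real (Ioo (-1 : ℝ) 1 ∩ {w | 1 - a < |w|})
      ≤ volume.real (Ioo (-1) (a - 1) ∪ Ioo (1 - a) 1) := measureReal_mono hsub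
        (measure_union_lt_top measure_Ioo_lt_top measure_Ioo_lt_top).ne
    _ ≤ volume.real (Ioo (-1) (a - 1)) + volume.real (Ioo (1 - a) 1) := measureReal_union_le _ _
    _ = 2 * a := by
      rw [Real.volume_real_Ioo_of_le (by linarith), Real.volume_real_Ioo_of_le (by linarith)]
      ring

section psi0bar

variable {x z : ℝ}

lemma psi0bar_nonneg (x z : ℝ) : 0 ≤ psi0bar x z :=
  mul_nonneg (by norm_num) <| setIntegral_nonneg measurableSet_Ioo fun _ hw =>
    psi0_nonneg (abs_lt.2 hw)

lemma psi0bar_le (x z : ℝ) : psi0bar x z ≤ 6 / π ^ 2 := by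
  have h : ‖∫ w in Ioo (-1 : ℝ) 1, psi0 w x z‖ ≤ 6 / π ^ 2 * volume.real (Ioo (-1 : ℝ) 1) :=
    norm_setIntegral_le_of_norm_le_const measure_Ioo_lt_top fun w hw => by
      rw [Real.norm_of_nonneg (psi0_nonneg (abs_lt.2 hw))]
      exact psi0_le (abs_lt.2 hw)
  rw [Real.volume_real_Ioo_of_le (by norm_num), Real.norm_eq_abs] at h
  unfold psi0bar
  linarith [le_abs_self (∫ w in Ioo (-1 : ℝ) 1, psi0 w x z)]

lemma psi0bar_le_inv_sq (hx : 0 < x) : psi0bar x z ≤ 6 / π ^ 2 * (x ^ 2)⁻¹ := by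
  set S : Set ℝ := {w | 1 - x⁻¹ < |w|}
  have hS : MeasurableSet S := measurableSet_lt measurable_const measurable_abs
  have hpt : ∀ w ∈ Ioo (-1 : ℝ) 1, psi0 w x z ≤ S.indicator (fun _ => 6 / π ^ 2 * x⁻¹) w := by
    intro w hw
    by_cases hwS : 1 - x⁻¹ < |w|
    · rw [indicator_of_mem (s := S) hwS]
      exact psi0_le_inv (abs_lt.2 hw) hx
    · rw [indicator_of_notMem (s := S) hwS]
      exact (psi0_eq_zero (abs_lt.2 hw) hx (Or.inl (by linarith))).le
  have hint : ∫ w in Ioo (-1 : ℝ) 1, psi0 w x z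
      ≤ ∫ w in Ioo (-1 : ℝ) 1, S.indicator (fun _ => 6 / π ^ 2 * x⁻¹) w :=
    integral_mono_of_nonneg (ae_restrict_of_forall_mem measurableSet_Ioo fun w hw =>
        psi0_nonneg (abs_lt.2 hw))
      ((integrableOn_const measure_Ioo_lt_top.ne).indicator hS)
      (ae_restrict_of_forall_mem measurableSet_Ioo hpt)
  rw [setIntegral_indicator hS, setIntegral_const, smul_eq_mul] at hint
  have hvol := measureReal_Ioo_inter_setOf_lt_abs_le (inv_nonneg.2 hx.le)
  unfold psi0bar
  calc 1 / 2 * ∫ w in Ioo (-1 : ℝ) 1, psi0 w x z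
      ≤ 1 / 2 * (2 * x⁻¹ * (6 / π ^ 2 * x⁻¹)) := by gcongr; exact hint.trans (by gcongr)
    _ = 6 / π ^ 2 * (x ^ 2)⁻¹ := by ring

lemma psi0bar_le_inv_one_add_pow_two (hx : 0 < x) : psi0bar x z ≤ 24 / π ^ 2 * ((1 + x) ^ 2)⁻¹ := by
  rw [show (24 : ℝ) / π ^ 2 = 6 / π ^ 2 * 4 by ring, mul_assoc]
  rcases le_total x 1 with hx1 | hx1
  · refine (psi0bar_le x z).trans (le_mul_of_one_le_right (by positivity) ?_)
    rw [← div_eq_mul_inv, one_le_div (by positivity)]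
    nlinarith
  · refine (psi0bar_le_inv_sq hx).trans (mul_le_mul_of_nonneg_left ?_ (by positivity))
    rw [← div_eq_mul_inv, inv_eq_one_div, div_le_div_iff₀ (by positivity) (by positivity)]
    nlinarith

lemma psi0bar_eq_zero (hx : 0 < x) (hxz : x⁻¹ ≤ 1 - |z|) : psi0bar x z = 0 := by
  rw [psi0bar, setIntegral_eq_zero_of_forall_eq_zero fun w (hw : w ∈ Ioo (-1 : ℝ) 1) =>
    psi0_eq_zero (abs_lt.2 hw) hx (Or.inr hxz), mul_zero]

end psi0bar

section OneAdd

variable {x : ℝ}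

lemma hasDerivAt_neg_inv_one_add (hx : -1 < x) :
    HasDerivAt (fun t => -(1 + t)⁻¹) ((1 + x) ^ 2)⁻¹ x := by
  have h : HasDerivAt (fun t => 1 + t) 1 x := (hasDerivAt_id x).const_add 1
  exact (h.inv (by linarith)).neg.congr_deriv (by rw [neg_div, neg_neg, one_div])

lemma tendsto_neg_inv_one_add_atTop : Tendsto (fun t : ℝ => -(1 + t)⁻¹) atTop (nhds 0) := by
  simpa using (tendsto_inv_atTop_zero.comp (tendsto_atTop_add_const_left _ (1 : ℝ) tendsto_id)).neg

lemma integrableOn_Ioi_inv_one_add_pow_two (hx : -1 < x) :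
    IntegrableOn (fun t => ((1 + t) ^ 2)⁻¹) (Ioi x) :=
  integrableOn_Ioi_deriv_of_nonneg' (fun t ht => hasDerivAt_neg_inv_one_add (hx.trans_le ht))
    (fun _ _ => by positivity) tendsto_neg_inv_one_add_atTop

lemma integral_Ioi_inv_one_add_pow_two (hx : -1 < x) :
    ∫ t in Ioi x, ((1 + t) ^ 2)⁻¹ = (1 + x)⁻¹ := by
  rw [integral_Ioi_of_hasDerivAt_of_nonneg'
    (fun t ht => hasDerivAt_neg_inv_one_add (hx.trans_le ht)) (fun _ _ => by positivity)
    tendsto_neg_inv_one_add_atTop, zero_sub, neg_neg]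

lemma integral_inv_one_add (hx : 0 ≤ x) : ∫ t in (0)..x, (1 + t)⁻¹ = log (1 + x) := by
  rw [intervalIntegral.integral_comp_add_left (fun t => t⁻¹), add_zero,
    integral_inv_of_pos one_pos (by linarith), div_one]

lemma log_one_add_le_one_add_log (hx : 1 ≤ x) : log (1 + x) ≤ 1 + log x := by
  have hx0 : 0 < x := by linarith
  have h := log_le_sub_one_of_pos (show 0 < (1 + x) / x by positivity)
  rw [log_div (by linarith) hx0.ne', add_div, div_self hx0.ne'] at h
  linarith [(div_le_one hx0).2 hx]

end OneAdd

section PsiCT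

variable {x z : ℝ}

lemma PsiCT_nonneg (x z : ℝ) : 0 ≤ PsiCT x z :=
  mul_nonneg zero_le_two <| setIntegral_nonneg measurableSet_Ioi fun t _ => psi0bar_nonneg t z

lemma PsiCT_le_inv_one_add (hx : 0 ≤ x) : PsiCT x z ≤ 48 / π ^ 2 * (1 + x)⁻¹ := by
  have hint : ∫ t in Ioi x, psi0bar t z ≤ ∫ t in Ioi x, 24 / π ^ 2 * ((1 + t) ^ 2)⁻¹ :=
    integral_mono_of_nonneg (ae_of_all _ fun t => psi0bar_nonneg t z)
      ((integrableOn_Ioi_inv_one_add_pow_two (by linarith)).const_mul _)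
      (ae_restrict_of_forall_mem measurableSet_Ioi fun t ht =>
        psi0bar_le_inv_one_add_pow_two (hx.trans_lt ht))
  rw [integral_const_mul, integral_Ioi_inv_one_add_pow_two (by linarith)] at hint
  calc PsiCT x z ≤ 2 * (24 / π ^ 2 * (1 + x)⁻¹) := by rw [PsiCT]; gcongr
    _ = 48 / π ^ 2 * (1 + x)⁻¹ := by ring

lemma PsiCT_eq_zero (hx : 0 < x) (hxz : x⁻¹ ≤ 1 - |z|) : PsiCT x z = 0 := by
  rw [PsiCT, setIntegral_eq_zero_of_forall_eq_zero fun t (ht : t ∈ Ioi x) =>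
    psi0bar_eq_zero (hx.trans ht) (((inv_lt_inv₀ (hx.trans ht) hx).2 ht).le.trans hxz),
    mul_zero]

end PsiCT

section PsiBarMarg

variable {z : ℝ}

lemma PsiBarMarg_nonneg (z : ℝ) : 0 ≤ PsiBarMarg z :=
  setIntegral_nonneg measurableSet_Ioi fun x _ => PsiCT_nonneg x z

lemma PsiBarMarg_le_log_one_add (hz : |z| < 1) :
    PsiBarMarg z ≤ 48 / π ^ 2 * log (1 + 1 / (1 - |z|)) := by
  set X := 1 / (1 - |z|)
  have hX : 0 ≤ X := by positivity
  have hpt : ∀ x ∈ Ioi (0 : ℝ),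
      PsiCT x z ≤ (Ioc 0 X).indicator (fun x => 48 / π ^ 2 * (1 + x)⁻¹) x := by
    rintro x (hx : 0 < x)
    by_cases hxX : x ≤ X
    · rw [indicator_of_mem (show x ∈ Ioc 0 X from ⟨hx, hxX⟩)]
      exact PsiCT_le_inv_one_add hx.le
    · rw [indicator_of_notMem fun h => hxX h.2, PsiCT_eq_zero hx]
      exact (inv_lt_of_inv_lt₀ (by linarith) (by rw [← one_div]; exact not_le.1 hxX)).le
  have hint : IntegrableOn (fun x => 48 / π ^ 2 * (1 + x)⁻¹) (Ioc 0 X) :=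
    (continuousOn_const.mul ((continuousOn_const.add continuousOn_id).inv₀ fun x hx =>
      (by linarith [hx.1] : (0 : ℝ) < 1 + x).ne')).integrableOn_Icc.mono_set Ioc_subset_Icc_self
  calc PsiBarMarg z ≤ ∫ x in Ioi 0, (Ioc 0 X).indicator (fun x => 48 / π ^ 2 * (1 + x)⁻¹) x :=
        integral_mono_of_nonneg (ae_of_all _ fun x => PsiCT_nonneg x z)
          (hint.integrable_indicator measurableSet_Ioc).integrableOn
          (ae_restrict_of_forall_mem measurableSet_Ioi hpt)
    _ = 48 / π ^ 2 * log (1 + X) := by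
      rw [setIntegral_indicator measurableSet_Ioc, inter_eq_right.2 Ioc_subset_Ioi_self,
        integral_const_mul, ← intervalIntegral.integral_of_le hX, integral_inv_one_add hX]

lemma PsiBarMarg_le (hz : |z| < 1) :
    PsiBarMarg z ≤ 48 / π ^ 2 * (1 + log (1 / (1 - |z|))) :=
  (PsiBarMarg_le_log_one_add hz).trans <| mul_le_mul_of_nonneg_left
    (log_one_add_le_one_add_log ((one_le_div (by linarith)).2 (by linarith [abs_nonneg z])))
    (by positivity)

end PsiBarMarg

lemma measurable_psi0 : Measurable fun v : ℝ × ℝ × ℝ => psi0 v.1 v.2.1 v.2.2 := by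
  unfold psi0
  repeat' first
    | fun_prop
    | refine Measurable.ite (Measurable.setOf ?_) ?_ ?_
    | refine Measurable.const_mul ?_ _
    | refine Measurable.add ?_ ?_

lemma measurable_psi0bar : Measurable (Function.uncurry psi0bar) := by
  have h : Measurable fun r : (ℝ × ℝ) × ℝ => psi0 r.2 r.1.1 r.1.2 :=
    measurable_psi0.comp (f := fun r : (ℝ × ℝ) × ℝ => (r.2, r.1.1, r.1.2)) (by fun_prop)
  exact (h.stronglyMeasurable.integral_prod_right'
    (ν := volume.restrict (Ioo (-1) 1))).measurable.const_mul _

lemma measurable_PsiCT : Measurable (Function.uncurry PsiCT) := by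
  have h : Measurable fun r : (ℝ × ℝ) × ℝ => (Ioi r.1.1).indicator (fun t => psi0bar t r.1.2) r.2 :=
    Measurable.ite (measurableSet_lt (measurable_fst.comp measurable_fst) measurable_snd)
      (measurable_psi0bar.comp (f := fun r : (ℝ × ℝ) × ℝ => (r.2, r.1.2)) (by fun_prop))
      measurable_const
  have := (h.stronglyMeasurable.integral_prod_right' (ν := volume)).measurable.const_mul 2
  simp_rw [integral_indicator measurableSet_Ioi] at this
  exact this

lemma measurable_PsiBarMarg : Measurable PsiBarMarg := by
  have h : Measurable fun r : ℝ × ℝ => PsiCT r.2 r.1 :=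
    measurable_PsiCT.comp (f := Prod.swap) (by fun_prop)
  exact (h.stronglyMeasurable.integral_prod_right' (ν := volume.restrict (Ioi 0))).measurable

lemma integrableOn_log_one_sub_abs : IntegrableOn (fun z => log (1 - |z|)) (Ioo (-1) 1) := by
  have hright : IntegrableOn (fun z => log (1 - z)) (Ioc 0 1) := by
    have h := (intervalIntegral.intervalIntegrable_log' (a := 0) (b := 1)).comp_sub_left 1
    rw [sub_zero, sub_self] at h
    exact (intervalIntegrable_iff_integrableOn_Ioc_of_le zero_le_one).1 h.symm
  have hleft : IntegrableOn (fun z => log (1 + z)) (Ioc (-1) 0) := by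
    have h := (intervalIntegral.intervalIntegrable_log' (a := 0) (b := 1)).comp_add_left 1
    rw [zero_sub, sub_self] at h
    exact (intervalIntegrable_iff_integrableOn_Ioc_of_le (by norm_num)).1 h
  refine ((hleft.congr_fun (fun z hz => ?_) measurableSet_Ioc).union
    (hright.congr_fun (fun z hz => ?_) measurableSet_Ioc)).mono_set fun z hz => ?_
  · rw [abs_of_nonpos hz.2, sub_neg_eq_add]
  · rw [abs_of_pos hz.1]
  · rcases le_or_gt z 0 with h | h
    exacts [Or.inl ⟨hz.1, h⟩, Or.inr ⟨h, hz.2.le⟩]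

/-- The marginal density `Ψ̄` of the continuous-time initial distribution satisfies a
logarithmic bound and is integrable on `(−1,1)`. -/
theorem stmt3 :
    ∃ C : ℝ, (∀ z ∈ Set.Ioo (-1 : ℝ) 1,
        PsiBarMarg z ≤ C * (1 + Real.log (1 / (1 - |z|)))) ∧
      IntegrableOn PsiBarMarg (Set.Ioo (-1 : ℝ) 1) volume := by
  refine ⟨48 / π ^ 2, fun z hz => PsiBarMarg_le (abs_lt.2 hz), ?_⟩
  have hbound : IntegrableOn (fun z => 48 / π ^ 2 * (1 + log (1 / (1 - |z|)))) (Ioo (-1) 1) := by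
    simp_rw [one_div, log_inv, ← sub_eq_add_neg]
    exact ((integrableOn_const measure_Ioo_lt_top.ne).sub integrableOn_log_one_sub_abs).const_mul _
  refine hbound.mono' measurable_PsiBarMarg.aestronglyMeasurable
    (ae_restrict_of_forall_mem measurableSet_Ioo fun z hz => ?_)
  rw [Real.norm_of_nonneg (PsiBarMarg_nonneg z)]
  exact PsiBarMarg_le (abs_lt.2 hz)
end
end

section
/- (Doeblin spectral gap.) Let (Ω, 𝔉, μ) be a probability space, J ∈ [0,1] a constant, and k : Ω × Ω → ℝ a measurable function satisfying k(x,y) = k(y,x) for all x, y, k(x,y) ≥ J for all x, y, and ∫ k(x,y) dμ(y) = 1 for every x ∈ Ω. Then the integral operator P on L²(Ω, μ) defined by (Pf)(x) := ∫ k(x,y) f(y) dμ(y) is a bounded self-adjoint operator, and, with Π the rank-one projection (Πf)(x) := ∫ f dμ, the operator norm satisfies ‖P − Π‖_{L²(μ) → L²(μ)} ≤ 1 − J. -/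
/-!
Write `T_h f x = ∫ h x y f y dμ(y)`. Schur's test: if `∫ |h x y| dμ(y) ≤ C` for every `x` and
`∫ |h x y| dμ(x) ≤ C` for every `y`, then Cauchy–Schwarz with the weight `|h x ·|` gives
`|T_h f x|² ≤ C ∫ |h x y| f(y)² dμ(y)`, and integrating in `x` (Tonelli) gives
`‖T_h f‖₂ ≤ C ‖f‖₂`; for a symmetric kernel Fubini gives `⟪T_h f, g⟫ = ⟪f, T_h g⟫`.
Since `∫ k x y dμ(y) = 1` and `f - Π f` has mean zero, `P - Π = T_{k-J} (1 - Π)`.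
The kernel `k - J` is nonnegative with row integrals `1 - J`, and `1 - Π` is an orthogonal
projection, so `‖P - Π‖ ≤ 1 - J`.
-/

open MeasureTheory Function
open scoped ENNReal NNReal RealInnerProductSpace

section

variable {Ω : Type*} [MeasurableSpace Ω] {μ : Measure Ω}

theorem lintegral_mul_rpow_two_le {w g : Ω → ℝ≥0∞} (hw : AEMeasurable w μ)
    (hg : AEMeasurable g μ) :
    (∫⁻ y, w y * g y ∂μ) ^ (2 : ℝ) ≤ (∫⁻ y, w y ∂μ) * ∫⁻ y, w y * g y ^ (2 : ℝ) ∂μ := by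
  have hsqrt_sq (a : ℝ≥0∞) : (a ^ (2⁻¹ : ℝ)) ^ (2 : ℝ) = a := by
    rw [← ENNReal.rpow_mul]; norm_num
  have hsq_sqrt (a : ℝ≥0∞) : (a ^ (2 : ℝ)) ^ (2⁻¹ : ℝ) = a := by
    rw [← ENNReal.rpow_mul]; norm_num
  have hsplit (y : Ω) : w y * g y = w y ^ (2⁻¹ : ℝ) * (w y * g y ^ (2 : ℝ)) ^ (2⁻¹ : ℝ) := by
    rw [ENNReal.mul_rpow_of_nonneg _ _ (by norm_num), hsq_sqrt, ← mul_assoc,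
      ← ENNReal.rpow_add_of_nonneg _ _ (by norm_num) (by norm_num)]
    norm_num
  have holder := ENNReal.lintegral_mul_norm_pow_le (g := fun y => w y * g y ^ (2 : ℝ)) hw
    (hw.mul (hg.pow_const 2)) (p := 2⁻¹) (q := 2⁻¹) (by norm_num) (by norm_num) (by norm_num)
  calc (∫⁻ y, w y * g y ∂μ) ^ (2 : ℝ)
      ≤ ((∫⁻ y, w y ∂μ) ^ (2⁻¹ : ℝ) * (∫⁻ y, w y * g y ^ (2 : ℝ) ∂μ) ^ (2⁻¹ : ℝ)) ^ (2 : ℝ) :=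
        ENNReal.rpow_le_rpow ((lintegral_congr hsplit).trans_le holder) (by norm_num)
    _ = _ := by rw [ENNReal.mul_rpow_of_nonneg _ _ (by norm_num), hsqrt_sq, hsqrt_sq]

theorem eLpNorm_lintegral_mul_le [SFinite μ] {H : Ω → Ω → ℝ≥0∞} (hH : Measurable (uncurry H))
    {C : ℝ≥0∞} (hrow : ∀ x, ∫⁻ y, H x y ∂μ ≤ C) (hcol : ∀ y, ∫⁻ x, H x y ∂μ ≤ C)
    {g : Ω → ℝ≥0∞} (hg : AEMeasurable g μ) :
    eLpNorm (fun x => ∫⁻ y, H x y * g y ∂μ) 2 μ ≤ C * eLpNorm g 2 μ := by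
  have hg2 : AEMeasurable (fun z : Ω × Ω => H z.1 z.2 * g z.2 ^ (2 : ℝ)) (μ.prod μ) :=
    hH.aemeasurable.mul
      ((hg.pow_const _).comp_quasiMeasurePreserving Measure.quasiMeasurePreserving_snd)
  have hsq : ∫⁻ x, (∫⁻ y, H x y * g y ∂μ) ^ (2 : ℝ) ∂μ
      ≤ C ^ (2 : ℝ) * ∫⁻ y, g y ^ (2 : ℝ) ∂μ :=
    calc ∫⁻ x, (∫⁻ y, H x y * g y ∂μ) ^ (2 : ℝ) ∂μ
        ≤ ∫⁻ x, C * ∫⁻ y, H x y * g y ^ (2 : ℝ) ∂μ ∂μ := lintegral_mono fun x =>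
          (lintegral_mul_rpow_two_le (hH.comp measurable_prodMk_left).aemeasurable hg).trans
            (mul_le_mul_left (hrow x) _)
      _ = C * ∫⁻ y, (∫⁻ x, H x y ∂μ) * g y ^ (2 : ℝ) ∂μ := by
          rw [lintegral_const_mul'' _ hg2.lintegral_prod_right', lintegral_lintegral_swap hg2]
          congr 1
          exact lintegral_congr fun y =>
            lintegral_mul_const (f := fun x => H x y) (g y ^ (2 : ℝ))
              (hH.comp measurable_prodMk_right)
      _ ≤ C * ∫⁻ y, C * g y ^ (2 : ℝ) ∂μ := by
          gcongr with y
          exact hcol y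
      _ = C ^ (2 : ℝ) * ∫⁻ y, g y ^ (2 : ℝ) ∂μ := by
          rw [lintegral_const_mul'' _ (hg.pow_const _), ← mul_assoc, ENNReal.rpow_two, sq]
  simp only [eLpNorm_eq_lintegral_rpow_enorm_toReal two_ne_zero ENNReal.ofNat_ne_top,
    enorm_eq_self, ENNReal.toReal_ofNat]
  calc (∫⁻ x, (∫⁻ y, H x y * g y ∂μ) ^ (2 : ℝ) ∂μ) ^ (1 / 2 : ℝ)
      ≤ (C ^ (2 : ℝ) * ∫⁻ y, g y ^ (2 : ℝ) ∂μ) ^ (1 / 2 : ℝ) :=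
        ENNReal.rpow_le_rpow hsq (by norm_num)
    _ = C * (∫⁻ y, g y ^ (2 : ℝ) ∂μ) ^ (1 / 2 : ℝ) := by
        rw [ENNReal.mul_rpow_of_nonneg _ _ (by norm_num), ← ENNReal.rpow_mul]
        norm_num

structure IsSchurKernel (μ : Measure Ω) (h : Ω → Ω → ℝ) (C : ℝ≥0) : Prop where
  measurable : Measurable (uncurry h)
  lintegral_enorm_row_le : ∀ x, ∫⁻ y, ‖h x y‖ₑ ∂μ ≤ C
  lintegral_enorm_col_le : ∀ y, ∫⁻ x, ‖h x y‖ₑ ∂μ ≤ C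

namespace IsSchurKernel

variable {h : Ω → Ω → ℝ} {C : ℝ≥0} {f g : Ω → ℝ}

theorem of_nonneg_of_symm (hm : Measurable (uncurry h)) (hsymm : ∀ x y, h x y = h y x)
    (hnonneg : ∀ x y, 0 ≤ h x y) (hint : ∀ x, Integrable (h x) μ) {c : ℝ}
    (hrow : ∀ x, ∫ y, h x y ∂μ = c) : IsSchurKernel μ h c.toNNReal := by
  have hrow' (x : Ω) : ∫⁻ y, ‖h x y‖ₑ ∂μ = ENNReal.ofReal c := by
    simp_rw [Real.enorm_eq_ofReal (hnonneg x _)]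
    rw [← ofReal_integral_eq_lintegral_ofReal (hint x) (ae_of_all _ (hnonneg x)), hrow]
  exact ⟨hm, fun x => (hrow' x).le, fun y => by simp_rw [hsymm _ y]; exact (hrow' y).le⟩

theorem norm (hk : IsSchurKernel μ h C) : IsSchurKernel μ (fun x y => ‖h x y‖) C :=
  ⟨hk.measurable.norm, by simpa using hk.lintegral_enorm_row_le,
    by simpa using hk.lintegral_enorm_col_le⟩

theorem aestronglyMeasurable_mul_snd (hk : IsSchurKernel μ h C)
    (hf : AEStronglyMeasurable f μ) :
    AEStronglyMeasurable (fun z : Ω × Ω => h z.1 z.2 * f z.2) (μ.prod μ) :=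
  hk.measurable.aestronglyMeasurable.mul
    (hf.comp_quasiMeasurePreserving Measure.quasiMeasurePreserving_snd)

variable [SFinite μ]

theorem eLpNorm_lintegral_enorm_mul_le (hk : IsSchurKernel μ h C)
    (hf : AEStronglyMeasurable f μ) :
    eLpNorm (fun x => ∫⁻ y, ‖h x y * f y‖ₑ ∂μ) 2 μ ≤ C * eLpNorm f 2 μ := by
  simp_rw [enorm_mul]
  rw [← eLpNorm_enorm f]
  exact eLpNorm_lintegral_mul_le hk.measurable.enorm hk.lintegral_enorm_row_le
    hk.lintegral_enorm_col_le hf.enorm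

theorem ae_integrable_mul (hk : IsSchurKernel μ h C) (hf : MemLp f 2 μ) :
    ∀ᵐ x ∂μ, Integrable (fun y => h x y * f y) μ := by
  have hfin : ∫⁻ x, (∫⁻ y, ‖h x y * f y‖ₑ ∂μ) ^ (2 : ℝ) ∂μ ≠ ∞ := by
    simpa using (lintegral_rpow_enorm_lt_top_of_eLpNorm_lt_top two_ne_zero ENNReal.ofNat_ne_top
      ((hk.eLpNorm_lintegral_enorm_mul_le hf.1).trans_lt
        (ENNReal.mul_lt_top ENNReal.coe_lt_top hf.2))).ne
  have hmeas := (hk.aestronglyMeasurable_mul_snd hf.1).enorm.lintegral_prod_right'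
  filter_upwards [ae_lt_top' (hmeas.pow_const _) hfin] with x hx
  exact ⟨(hk.measurable.comp measurable_prodMk_left).aestronglyMeasurable.mul hf.1,
    (ENNReal.rpow_lt_top_iff_of_pos two_pos).1 hx⟩

theorem eLpNorm_integral_mul_le (hk : IsSchurKernel μ h C) (hf : AEStronglyMeasurable f μ) :
    eLpNorm (fun x => ∫ y, h x y * f y ∂μ) 2 μ ≤ C * eLpNorm f 2 μ :=
  (eLpNorm_mono_enorm fun _ => (enorm_integral_le_lintegral_enorm _).trans_eq
    (enorm_eq_self _).symm).trans (hk.eLpNorm_lintegral_enorm_mul_le hf)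

theorem memLp_integral_mul (hk : IsSchurKernel μ h C) (hf : MemLp f 2 μ) :
    MemLp (fun x => ∫ y, h x y * f y ∂μ) 2 μ :=
  ⟨(hk.aestronglyMeasurable_mul_snd hf.1).integral_prod_right',
    (hk.eLpNorm_integral_mul_le hf.1).trans_lt (ENNReal.mul_lt_top ENNReal.coe_lt_top hf.2)⟩

noncomputable def integralOperator (hk : IsSchurKernel μ h C) : Lp ℝ 2 μ →L[ℝ] Lp ℝ 2 μ :=
  LinearMap.mkContinuous
    { toFun f := (hk.memLp_integral_mul (Lp.memLp f)).toLp _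
      map_add' f g := by
        rw [← MemLp.toLp_add]
        apply MemLp.toLp_congr
        filter_upwards [hk.ae_integrable_mul (Lp.memLp f), hk.ae_integrable_mul (Lp.memLp g)]
          with x hf hg
        rw [Pi.add_apply, ← integral_add hf hg]
        refine integral_congr_ae ?_
        filter_upwards [Lp.coeFn_add f g] with y hy
        rw [hy, Pi.add_apply, mul_add]
      map_smul' c f := by
        rw [← MemLp.toLp_const_smul]
        apply MemLp.toLp_congr
        refine ae_of_all _ fun x => ?_
        rw [Pi.smul_apply, smul_eq_mul, ← integral_const_mul]
        refine integral_congr_ae ?_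
        filter_upwards [Lp.coeFn_smul c f] with y hy
        rw [hy, Pi.smul_apply, smul_eq_mul, RingHom.id_apply]
        ring }
    C fun f => by
      rw [LinearMap.coe_mk, AddHom.coe_mk, Lp.norm_toLp, Lp.norm_def, ← ENNReal.coe_toReal C,
        ← ENNReal.toReal_mul]
      exact ENNReal.toReal_mono (ENNReal.mul_ne_top ENNReal.coe_ne_top (Lp.memLp f).2.ne)
        (hk.eLpNorm_integral_mul_le (Lp.memLp f).1)

theorem coeFn_integralOperator (hk : IsSchurKernel μ h C) (f : Lp ℝ 2 μ) :
    (hk.integralOperator f : Ω → ℝ) =ᵐ[μ] fun x => ∫ y, h x y * f y ∂μ :=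
  MemLp.coeFn_toLp (hk.memLp_integral_mul (Lp.memLp f))

theorem norm_integralOperator_le (hk : IsSchurKernel μ h C) : ‖hk.integralOperator‖ ≤ C :=
  LinearMap.mkContinuous_norm_le _ C.2 _

theorem integral_mul_integral_mul_comm (hk : IsSchurKernel μ h C) (hf : MemLp f 2 μ)
    (hg : MemLp g 2 μ) :
    ∫ x, g x * ∫ y, h x y * f y ∂μ ∂μ = ∫ y, f y * ∫ x, h x y * g x ∂μ ∂μ := by
  have hint : Integrable (uncurry fun x y => g x * (h x y * f y)) (μ.prod μ) := by
    have hm : AEStronglyMeasurable (uncurry fun x y => g x * (h x y * f y)) (μ.prod μ) :=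
      (hg.1.comp_quasiMeasurePreserving Measure.quasiMeasurePreserving_fst).mul
        (hk.aestronglyMeasurable_mul_snd hf.1)
    refine (integrable_prod_iff hm).2 ⟨?_, ?_⟩
    · filter_upwards [hk.ae_integrable_mul hf] with x hx using hx.const_mul (g x)
    · simp only [uncurry, norm_mul, integral_const_mul]
      exact hg.norm.integrable_mul (hk.norm.memLp_integral_mul hf.norm)
  simp_rw [← integral_const_mul]
  rw [integral_integral_swap hint]
  congr with y
  congr with x
  ring

theorem inner_integralOperator_comm (hk : IsSchurKernel μ h C) (hsymm : ∀ x y, h x y = h y x)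
    (f g : Lp ℝ 2 μ) : ⟪hk.integralOperator f, g⟫ = ⟪f, hk.integralOperator g⟫ := by
  have hf := hk.coeFn_integralOperator f
  have hg := hk.coeFn_integralOperator g
  calc ⟪hk.integralOperator f, g⟫ = ∫ x, g x * ∫ y, h x y * f y ∂μ ∂μ := by
        rw [L2.inner_def]
        refine integral_congr_ae ?_
        filter_upwards [hf] with x hx
        rw [hx, RCLike.inner_apply, conj_trivial]
    _ = ∫ y, f y * ∫ x, h y x * g x ∂μ ∂μ := by
        simp_rw [hk.integral_mul_integral_mul_comm (Lp.memLp f) (Lp.memLp g), hsymm]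
    _ = ⟪f, hk.integralOperator g⟫ := by
        rw [L2.inner_def]
        refine integral_congr_ae ?_
        filter_upwards [hg] with x hx
        rw [hx, RCLike.inner_apply, conj_trivial, mul_comm]

end IsSchurKernel

noncomputable def meanProjection (μ : Measure Ω) [IsFiniteMeasure μ] :
    Lp ℝ 2 μ →L[ℝ] Lp ℝ 2 μ :=
  InnerProductSpace.rankOne ℝ (Lp.const 2 μ (1 : ℝ)) (Lp.const 2 μ (1 : ℝ))

theorem coeFn_meanProjection [IsFiniteMeasure μ] (f : Lp ℝ 2 μ) :
    (meanProjection μ f : Ω → ℝ) =ᵐ[μ] fun _ => ∫ y, f y ∂μ := by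
  have hinner : ⟪Lp.const 2 μ (1 : ℝ), f⟫ = ∫ y, f y ∂μ := by
    rw [L2.inner_def]
    refine integral_congr_ae ?_
    filter_upwards [Lp.coeFn_const 2 μ (1 : ℝ)] with y hy
    rw [hy, const_apply, RCLike.inner_apply, conj_trivial, mul_one]
  filter_upwards [Lp.coeFn_smul ⟪Lp.const 2 μ (1 : ℝ), f⟫ (Lp.const 2 μ (1 : ℝ)),
    Lp.coeFn_const 2 μ (1 : ℝ)] with x h1 h2
  rw [meanProjection, InnerProductSpace.rankOne_apply, h1, Pi.smul_apply, h2, const_apply,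
    smul_eq_mul, mul_one, hinner]

theorem isStarProjection_meanProjection [IsProbabilityMeasure μ] :
    IsStarProjection (meanProjection μ) :=
  InnerProductSpace.isStarProjection_rankOne_self (by simp [Lp.norm_const])

theorem integral_sub_const_mul_sub_integral [IsProbabilityMeasure μ] {k f : Ω → ℝ}
    (hk : Integrable k μ) (hf : Integrable f μ) (hkf : Integrable (fun y => k y * f y) μ)
    (hk1 : ∫ y, k y ∂μ = 1) (J : ℝ) :
    ∫ y, (k y - J) * (f y - ∫ z, f z ∂μ) ∂μ = ∫ y, k y * f y ∂μ - ∫ y, f y ∂μ := by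
  set m := ∫ z, f z ∂μ
  have hexpand (y : Ω) : (k y - J) * (f y - m) = k y * f y - m * k y - J * (f y - m) := by ring
  have hcentered : ∫ y, (f y - m) ∂μ = 0 := by
    rw [integral_sub hf (integrable_const m)]
    simp [m]
  have hkm : Integrable (fun y => m * k y) μ := hk.const_mul m
  have hJf : Integrable (fun y => J * (f y - m)) μ := (hf.sub (integrable_const m)).const_mul J
  have hkfm : Integrable (fun y => k y * f y - m * k y) μ := hkf.sub hkm
  simp_rw [hexpand]
  rw [integral_sub hkfm hJf, integral_sub hkf hkm, integral_const_mul,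
    integral_const_mul, hk1, hcentered]
  ring

theorem IsSchurKernel.integralOperator_sub_meanProjection [SFinite μ] [IsProbabilityMeasure μ]
    {k : Ω → Ω → ℝ} {J : ℝ} {C D : ℝ≥0} (hk : IsSchurKernel μ k C)
    (hkJ : IsSchurKernel μ (fun x y => k x y - J) D) (hk1 : ∀ x, ∫ y, k x y ∂μ = 1) :
    hk.integralOperator - meanProjection μ = hkJ.integralOperator ∘L (1 - meanProjection μ) := by
  ext1 f
  have hcenter : ((1 - meanProjection μ) f : Ω → ℝ) =ᵐ[μ] fun y => f y - ∫ z, f z ∂μ := by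
    filter_upwards [Lp.coeFn_sub f (meanProjection μ f), coeFn_meanProjection f] with y h1 h2
    rw [sub_apply, one_apply_eq_self, h1, Pi.sub_apply, h2]
  refine Lp.ext ?_
  filter_upwards [Lp.coeFn_sub (hk.integralOperator f) (meanProjection μ f),
    hk.coeFn_integralOperator f, coeFn_meanProjection f,
    hkJ.coeFn_integralOperator ((1 - meanProjection μ) f), hk.ae_integrable_mul (Lp.memLp f)]
    with x h1 h2 h3 h4 h5
  rw [sub_apply, h1, Pi.sub_apply, h2, h3, ContinuousLinearMap.comp_apply, h4,
    integral_congr_ae (hcenter.mono fun y hy => congrArg _ hy)]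
  exact (integral_sub_const_mul_sub_integral (integrable_of_integral_eq_one (hk1 x))
    ((Lp.memLp f).integrable one_le_two) h5 (hk1 x) J).symm

end

/-- **Doeblin spectral gap.** If `k` is a symmetric measurable Markov transition density on a
probability space `(Ω, μ)` bounded below by a constant `J ∈ [0,1]`, then the associated
integral operator `P` on `L²(μ)` is bounded and self-adjoint, and with `Π` the rank-one
projection onto constants, `‖P − Π‖ ≤ 1 − J`. -/
theorem stmt5 {Ω : Type*} [MeasurableSpace Ω] (μ : Measure Ω) [IsProbabilityMeasure μ]
    (J : ℝ) (hJ : J ∈ Set.Icc (0 : ℝ) 1)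
    (k : Ω → Ω → ℝ) (hkmeas : Measurable (Function.uncurry k))
    (hksymm : ∀ x y, k x y = k y x)
    (hklb : ∀ x y, J ≤ k x y)
    (hkint : ∀ x, ∫ y, k x y ∂μ = 1) :
    ∃ P Pi : Lp ℝ 2 μ →L[ℝ] Lp ℝ 2 μ,
      (∀ f : Lp ℝ 2 μ, (P f : Ω → ℝ) =ᵐ[μ] fun x => ∫ y, k x y * f y ∂μ) ∧
      (∀ f : Lp ℝ 2 μ, (Pi f : Ω → ℝ) =ᵐ[μ] fun _ => ∫ y, f y ∂μ) ∧
      (∀ f g : Lp ℝ 2 μ, ⟪P f, g⟫ = ⟪f, P g⟫) ∧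
      ‖P - Pi‖ ≤ 1 - J := by
  have hkI (x : Ω) : Integrable (k x) μ := integrable_of_integral_eq_one (hkint x)
  have hP := IsSchurKernel.of_nonneg_of_symm hkmeas hksymm
    (fun x y => hJ.1.trans (hklb x y)) hkI hkint
  have hD := IsSchurKernel.of_nonneg_of_symm (h := fun x y => k x y - J)
    (hkmeas.sub measurable_const) (fun x y => by rw [hksymm]) (fun x y => sub_nonneg.2 (hklb x y))
    (fun x => (hkI x).sub (integrable_const J)) (c := 1 - J)
    (fun x => by simp [integral_sub (hkI x) (integrable_const J), hkint])
  refine ⟨hP.integralOperator, meanProjection μ, hP.coeFn_integralOperator,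
    coeFn_meanProjection, hP.inner_integralOperator_comm hksymm, ?_⟩
  rw [hP.integralOperator_sub_meanProjection hD hkint]
  calc ‖hD.integralOperator ∘L (1 - meanProjection μ)‖
      ≤ ‖hD.integralOperator‖ * ‖1 - meanProjection μ‖ := ContinuousLinearMap.opNorm_comp_le _ _
    _ ≤ (1 - J) * 1 :=
        mul_le_mul (hD.norm_integralOperator_le.trans_eq (Real.coe_toNNReal _ (sub_nonneg.2 hJ.2)))
          isStarProjection_meanProjection.one_sub.norm_le (norm_nonneg _) (sub_nonneg.2 hJ.2)
    _ = 1 - J := mul_one _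
end

section
/- Let H be a real Hilbert space, H₀ ⊆ H a closed subspace with orthogonal projection Π : H → H, and let P : H → H be a bounded linear operator with PΠ = ΠP = Π and ‖P − Π‖ ≤ ω₀ for some constant ω₀ < 1. Let U : H → H be an orthogonal (isometric, surjective) linear operator such that ‖Π(U f₀)‖ ≤ δ·‖f₀‖ for every f₀ ∈ H₀, for some constant δ < 1. Then ‖P U P‖ < 1; consequently the spectral radius of P U satisfies lim_{n→∞} ‖(PU)ⁿ‖^{1/n} < 1. -/
/-!
Split `x = Πx + (x - Πx)`. Since `ΠP = Π` and `Px - Πx = (P - Π)(x - Πx)`, Pythagoras gives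
`‖Px‖² ≤ ω₀²‖x‖² + (1 - ω₀²)‖Πx‖²`. Applied to `x` and to `y = UPx`
this bounds `‖PUPx‖²` by both `‖x‖² - (1 - ω₀²)‖x - Πx‖²` and `‖x‖² - (1 - ω₀²)(‖x‖² - ‖Πy‖²)`.
The two defects cannot both be small, because `‖Πy‖ ≤ δ‖x‖ + ‖x - Πx‖`; averaging gives
`‖PUP‖² ≤ 1 - (1 - ω₀²)(1 - δ)²/2`. As `(PU)² = PUP · U`, the limit of `‖(PU)ⁿ‖^{1/n}`, which
exists by Fekete's lemma, is at most `‖(PU)²‖^{1/2} < 1`.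
-/

open scoped RealInnerProductSpace
open Filter Topology

theorem NormedRing.exists_tendsto_norm_pow_rpow_inv {A : Type*} [NormedRing A]
    (h1 : ‖(1 : A)‖ ≤ 1) (a : A) :
    ∃ r, (∀ n : ℕ, n ≠ 0 → r ≤ ‖a ^ n‖ ^ (n : ℝ)⁻¹) ∧
      Tendsto (fun n : ℕ => ‖a ^ n‖ ^ (n : ℝ)⁻¹) atTop (𝓝 r) := by
  -- Fekete's lemma, as `smoothingFun` of the norm on the commutative subring generated by `a`
  let μ : RingSeminorm (Algebra.elemental ℤ a) := normRingSeminorm _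
  let a' : Algebra.elemental ℤ a := ⟨a, Algebra.elemental.self_mem ℤ a⟩
  simp_rw [← one_div]
  exact ⟨smoothingFun μ a', fun n hn => smoothingFun_le μ a' ⟨n, Nat.pos_of_ne_zero hn⟩,
    tendsto_smoothingFun_of_map_one_le_one μ h1 a'⟩

theorem ContinuousLinearMap.opNorm_lt_one_of_norm_sq_le {𝕜 E F : Type*}
    [NontriviallyNormedField 𝕜] [SeminormedAddCommGroup E] [SeminormedAddCommGroup F]
    [NormedSpace 𝕜 E] [NormedSpace 𝕜 F]
    (T : E →L[𝕜] F) {κ : ℝ} (hκ : κ < 1) (hT : ∀ x, ‖T x‖ ^ 2 ≤ κ * ‖x‖ ^ 2) : ‖T‖ < 1 := by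
  refine (T.opNorm_le_bound (Real.sqrt_nonneg κ) fun x => ?_).trans_lt
    ((Real.sqrt_lt' one_pos).2 (by simpa using hκ))
  calc ‖T x‖ = √(‖T x‖ ^ 2) := (Real.sqrt_sq (norm_nonneg _)).symm
    _ ≤ √(κ * ‖x‖ ^ 2) := Real.sqrt_le_sqrt (hT x)
    _ = √κ * ‖x‖ := by rw [Real.sqrt_mul' _ (sq_nonneg _), Real.sqrt_sq (norm_nonneg _)]

theorem one_sub_sq_mul_sq_le_sq_add_sq_sub_sq {d h m r : ℝ} (hd₀ : 0 ≤ d) (hd₁ : d ≤ 1)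
    (hm : 0 ≤ m) (hmr : m ≤ r) (hmd : m ≤ d * r + h) :
    (1 - d) ^ 2 * r ^ 2 ≤ h ^ 2 + (r ^ 2 - m ^ 2) := by
  rcases le_total ((1 - d) * r) h with hh | hh
  · nlinarith [mul_nonneg (sub_nonneg.2 hd₁) (hm.trans hmr)]
  · nlinarith [mul_nonneg (mul_nonneg hd₀ (hm.trans hmr)) (sub_nonneg.2 hh)]

section
variable {H : Type*} [NormedAddCommGroup H] [InnerProductSpace ℝ H] {Pi P U : H →L[ℝ] H}

theorem norm_sq_eq_norm_sq_apply_add_norm_sq_sub_apply (hPi : ∀ x y, ⟪x - Pi x, Pi y⟫ = 0)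
    (x : H) : ‖x‖ ^ 2 = ‖Pi x‖ ^ 2 + ‖x - Pi x‖ ^ 2 := by
  have h := norm_add_sq_eq_norm_sq_add_norm_sq_real ((real_inner_comm _ _).trans (hPi x x))
  rw [add_sub_cancel] at h
  simpa only [sq] using h

theorem norm_apply_le_of_inner_sub_apply_eq_zero (hPi : ∀ x y, ⟪x - Pi x, Pi y⟫ = 0) (x : H) :
    ‖Pi x‖ ≤ ‖x‖ := by
  refine (pow_le_pow_iff_left₀ (norm_nonneg _) (norm_nonneg _) two_ne_zero).1 ?_
  rw [norm_sq_eq_norm_sq_apply_add_norm_sq_sub_apply hPi x]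
  exact le_add_of_nonneg_right (sq_nonneg _)

theorem sub_apply_eq_apply_sub_apply (hPiPi : Pi.comp Pi = Pi) (hPPi : P.comp Pi = Pi) (x : H) :
    P x - Pi x = (P - Pi) (x - Pi x) := by
  rw [sub_apply, map_sub, map_sub, ← P.comp_apply, hPPi, ← Pi.comp_apply,
    hPiPi, sub_sub_sub_cancel_right]

theorem norm_sub_apply_le (hPiPi : Pi.comp Pi = Pi) (hPPi : P.comp Pi = Pi) {ω : ℝ}
    (hP : ‖P - Pi‖ ≤ ω) (x : H) : ‖P x - Pi x‖ ≤ ω * ‖x - Pi x‖ := by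
  rw [sub_apply_eq_apply_sub_apply hPiPi hPPi]
  exact (P - Pi).le_of_opNorm_le hP _

theorem norm_sq_apply_le (hPi : ∀ x y, ⟪x - Pi x, Pi y⟫ = 0) (hPiPi : Pi.comp Pi = Pi)
    (hPPi : P.comp Pi = Pi) (hPiP : Pi.comp P = Pi) {ω : ℝ} (hP : ‖P - Pi‖ ≤ ω) (x : H) :
    ‖P x‖ ^ 2 ≤ ω ^ 2 * ‖x‖ ^ 2 + (1 - ω ^ 2) * ‖Pi x‖ ^ 2 := by
  have hPx := norm_sq_eq_norm_sq_apply_add_norm_sq_sub_apply hPi (P x)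
  have hx := norm_sq_eq_norm_sq_apply_add_norm_sq_sub_apply hPi x
  rw [← Pi.comp_apply, hPiP] at hPx
  have h := pow_le_pow_left₀ (norm_nonneg _) (norm_sub_apply_le hPiPi hPPi hP x) 2
  rw [mul_pow] at h
  linear_combination hPx + h - ω ^ 2 * hx

theorem norm_apply_apply_le_mul_add_norm_sub (hPi : ∀ x y, ⟪x - Pi x, Pi y⟫ = 0)
    (hPiPi : Pi.comp Pi = Pi) (hPPi : P.comp Pi = Pi) {ω d : ℝ} (hω : ω ≤ 1) (hP : ‖P - Pi‖ ≤ ω)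
    (hUiso : ∀ x, ‖U x‖ = ‖x‖) (hd : 0 ≤ d) (hU : ∀ x, ‖Pi (U (Pi x))‖ ≤ d * ‖Pi x‖) (x : H) :
    ‖Pi (U (P x))‖ ≤ d * ‖x‖ + ‖x - Pi x‖ :=
  calc ‖Pi (U (P x))‖ = ‖Pi (U (Pi x)) + Pi (U (P x - Pi x))‖ := by
        rw [← map_add, ← map_add, add_sub_cancel]
    _ ≤ ‖Pi (U (Pi x))‖ + ‖Pi (U (P x - Pi x))‖ := norm_add_le _ _
    _ ≤ d * ‖Pi x‖ + ω * ‖x - Pi x‖ := by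
        refine add_le_add (hU x) ?_
        exact (norm_apply_le_of_inner_sub_apply_eq_zero hPi _).trans
          ((hUiso _).le.trans (norm_sub_apply_le hPiPi hPPi hP x))
    _ ≤ d * ‖x‖ + ‖x - Pi x‖ := by
        gcongr
        · exact norm_apply_le_of_inner_sub_apply_eq_zero hPi x
        · exact mul_le_of_le_one_left (norm_nonneg _) hω

theorem norm_sq_apply_comp_comp_le (hPi : ∀ x y, ⟪x - Pi x, Pi y⟫ = 0) (hPiPi : Pi.comp Pi = Pi)
    (hPPi : P.comp Pi = Pi) (hPiP : Pi.comp P = Pi) {ω d : ℝ} (hω : ω < 1) (hP : ‖P - Pi‖ ≤ ω)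
    (hUiso : ∀ x, ‖U x‖ = ‖x‖) (hd₀ : 0 ≤ d) (hd₁ : d ≤ 1)
    (hU : ∀ x, ‖Pi (U (Pi x))‖ ≤ d * ‖Pi x‖) (x : H) :
    ‖P.comp (U.comp P) x‖ ^ 2 ≤ (1 - (1 - ω ^ 2) * (1 - d) ^ 2 / 2) * ‖x‖ ^ 2 := by
  set y := U (P x)
  have hω₁ : 0 ≤ 1 - ω ^ 2 := by nlinarith [(norm_nonneg _).trans hP]
  have hx := norm_sq_eq_norm_sq_apply_add_norm_sq_sub_apply hPi x
  have hPy := norm_sq_apply_le hPi hPiPi hPPi hPiP hP y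
  have hy : ‖y‖ ^ 2 ≤ ‖x‖ ^ 2 - (1 - ω ^ 2) * ‖x - Pi x‖ ^ 2 := by
    rw [hUiso]
    linear_combination norm_sq_apply_le hPi hPiPi hPPi hPiP hP x - (1 - ω ^ 2) * hx
  have hPiy : ‖Pi y‖ ≤ ‖y‖ := norm_apply_le_of_inner_sub_apply_eq_zero hPi y
  have hyx : ‖y‖ ≤ ‖x‖ :=
    (pow_le_pow_iff_left₀ (norm_nonneg _) (norm_nonneg _) two_ne_zero).1
      (hy.trans (sub_le_self _ (mul_nonneg hω₁ (sq_nonneg _))))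
  have hdefect := one_sub_sq_mul_sq_le_sq_add_sq_sub_sq hd₀ hd₁ (norm_nonneg _) (hPiy.trans hyx)
    (norm_apply_apply_le_mul_add_norm_sub hPi hPiPi hPPi hω.le hP hUiso hd₀ hU x)
  have hPy₁ : ‖P y‖ ^ 2 ≤ ‖x‖ ^ 2 - (1 - ω ^ 2) * ‖x - Pi x‖ ^ 2 := by
    linarith [mul_le_mul_of_nonneg_left (pow_le_pow_left₀ (norm_nonneg _) hPiy 2) hω₁]
  have hPy₂ : ‖P y‖ ^ 2 ≤ ‖x‖ ^ 2 - (1 - ω ^ 2) * (‖x‖ ^ 2 - ‖Pi y‖ ^ 2) := by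
    linarith [mul_le_mul_of_nonneg_left (pow_le_pow_left₀ (norm_nonneg _) hyx 2) (sq_nonneg ω)]
  show ‖P y‖ ^ 2 ≤ _
  linarith [mul_le_mul_of_nonneg_left hdefect hω₁]

end

theorem stmt6_general {H : Type*} [NormedAddCommGroup H] [InnerProductSpace ℝ H]
    (H₀ : Submodule ℝ H)
    (Pi : H →L[ℝ] H)
    (hPiMem : ∀ x : H, Pi x ∈ H₀)
    (hPiId : ∀ x ∈ H₀, Pi x = x)
    (hPiOrth : ∀ x : H, ∀ y ∈ H₀, ⟪x - Pi x, y⟫ = 0)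
    (P : H →L[ℝ] H) (hPPi : P.comp Pi = Pi) (hPiP : Pi.comp P = Pi)
    (ω₀ : ℝ) (hω₀ : ω₀ < 1) (hPnorm : ‖P - Pi‖ ≤ ω₀)
    (U : H →L[ℝ] H) (hUiso : ∀ x : H, ‖U x‖ = ‖x‖)
    (δ : ℝ) (hδ : δ < 1) (hU : ∀ f₀ ∈ H₀, ‖Pi (U f₀)‖ ≤ δ * ‖f₀‖) :
    ‖P.comp (U.comp P)‖ < 1 ∧
      ∃ r : ℝ, r < 1 ∧
        Filter.Tendsto (fun n : ℕ => ‖(P.comp U) ^ n‖ ^ ((n : ℝ)⁻¹))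
          Filter.atTop (nhds r) := by
  have hPi : ∀ x y, ⟪x - Pi x, Pi y⟫ = 0 := fun x y => hPiOrth x _ (hPiMem y)
  have hPiPi : Pi.comp Pi = Pi := ContinuousLinearMap.ext fun x => hPiId _ (hPiMem x)
  have hUPi (x : H) : ‖Pi (U (Pi x))‖ ≤ max δ 0 * ‖Pi x‖ :=
    (hU _ (hPiMem x)).trans (by gcongr; exact le_max_left _ _)
  have hκ : 1 - (1 - ω₀ ^ 2) * (1 - max δ 0) ^ 2 / 2 < 1 := by
    have hω : 0 < 1 - ω₀ ^ 2 := by nlinarith [(norm_nonneg _).trans hPnorm]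
    have hd : 0 < 1 - max δ 0 := sub_pos.2 (max_lt hδ one_pos)
    linarith [mul_pos hω (pow_pos hd 2)]
  have hPUP : ‖P.comp (U.comp P)‖ < 1 :=
    (P.comp (U.comp P)).opNorm_lt_one_of_norm_sq_le hκ <| norm_sq_apply_comp_comp_le hPi hPiPi
      hPPi hPiP hω₀ hPnorm hUiso (le_max_right _ _) (max_le hδ.le zero_le_one) hUPi
  have hPU_sq : ‖(P.comp U) ^ 2‖ < 1 :=
    calc ‖(P.comp U) ^ 2‖ = ‖P.comp (U.comp P) * U‖ := by rw [pow_two]; rfl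
      _ ≤ ‖P.comp (U.comp P)‖ * ‖U‖ := norm_mul_le _ _
      _ ≤ ‖P.comp (U.comp P)‖ := mul_le_of_le_one_right (norm_nonneg _)
          (U.opNorm_le_bound zero_le_one fun x => (hUiso x).trans_le (one_mul _).ge)
      _ < 1 := hPUP
  obtain ⟨r, hr_le, hr⟩ :=
    NormedRing.exists_tendsto_norm_pow_rpow_inv ContinuousLinearMap.norm_id_le (P.comp U)
  refine ⟨hPUP, r, (hr_le 2 two_ne_zero).trans_lt ?_, hr⟩
  exact Real.rpow_lt_one (norm_nonneg _) hPU_sq (by positivity)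

/-- Abstract spectral gap estimate: if `P` is a bounded operator commuting with the orthogonal
projection `Π` onto a closed subspace `H₀` (`PΠ = ΠP = Π`) with `‖P − Π‖ ≤ ω₀ < 1`, and `U` is
an orthogonal operator whose averaged projection onto `H₀` is a contraction
(`‖Π(Uf₀)‖ ≤ δ‖f₀‖` on `H₀` with `δ < 1`), then `‖PUP‖ < 1`, and consequently the spectral
radius `lim ‖(PU)ⁿ‖^{1/n}` is strictly less than `1`. -/
theorem stmt6 {H : Type*} [NormedAddCommGroup H] [InnerProductSpace ℝ H] [CompleteSpace H]
    (H₀ : Submodule ℝ H) (hH₀ : IsClosed (H₀ : Set H))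
    (Pi : H →L[ℝ] H)
    (hPiMem : ∀ x : H, Pi x ∈ H₀)
    (hPiId : ∀ x ∈ H₀, Pi x = x)
    (hPiOrth : ∀ x : H, ∀ y ∈ H₀, ⟪x - Pi x, y⟫ = 0)
    (P : H →L[ℝ] H) (hPPi : P.comp Pi = Pi) (hPiP : Pi.comp P = Pi)
    (ω₀ : ℝ) (hω₀ : ω₀ < 1) (hPnorm : ‖P - Pi‖ ≤ ω₀)
    (U : H →L[ℝ] H) (hUiso : ∀ x : H, ‖U x‖ = ‖x‖) (hUsurj : Function.Surjective U)
    (δ : ℝ) (hδ : δ < 1) (hU : ∀ f₀ ∈ H₀, ‖Pi (U f₀)‖ ≤ δ * ‖f₀‖) :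
    ‖P.comp (U.comp P)‖ < 1 ∧
      ∃ r : ℝ, r < 1 ∧
        Filter.Tendsto (fun n : ℕ => ‖(P.comp U) ^ n‖ ^ ((n : ℝ)⁻¹))
          Filter.atTop (nhds r) :=
  stmt6_general H₀ Pi hPiMem hPiId hPiOrth P hPPi hPiP ω₀ hω₀ hPnorm U hUiso δ hδ hU
end
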